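/- arXiv:2504.17776 — 6 statements merged into one kernel-verified Lean document; each statement's English description precedes it below -/
import Mathlib

section
/- Let D and O be symmetric functions on pairs with O an ultrametric, and let c = max over pairs of |D(u,v) - O(u,v)| (the ℓ∞ error). Define O'(u,v) = max(0, O(u,v) - c). Then O'(u,v) ≤ D(u,v) for all pairs, and max over pairs of |D(u,v) - O'(u,v)| ≤ 2c. In other words, an optimal decrement-only ultrametric fit is at most a 2-approximation to the best ℓ∞ ultrametric fit. -/
theorem stmt1 {V : Type*} (D O : V → V → ℝ) (c : ℝ)
    (hDsymm : ∀ u v, D u v = D v u) (hDnonneg : ∀ u v, 0 ≤ D u v)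
    (hOsymm : ∀ u v, O u v = O v u)
    (hOultra : ∀ u v w, O u v ≤ max (O u w) (O w v))
    (hc0 : 0 ≤ c) (hc : ∀ u v, |D u v - O u v| ≤ c) :
    (∀ u v, max 0 (O u v - c) ≤ D u v) ∧
      (∀ u v, |D u v - max 0 (O u v - c)| ≤ 2 * c) := by
  constructor
  · intro u v
    have h := abs_le.mp (hc u v)
    have := hDnonneg u v
    rcases le_total (O u v - c) 0 with h0 | h0 <;> simp [max_eq_left, max_eq_right, h0] <;> linarith [h.1, h.2]
  · intro u v
    have h := abs_le.mp (hc u v)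
    have := hDnonneg u v
    rcases le_total (O u v - c) 0 with h0 | h0
    · rw [max_eq_left h0]
      rw [abs_le]; constructor <;> linarith [h.1, h.2]
    · rw [max_eq_right h0]
      rw [abs_le]; constructor <;> linarith [h.1, h.2]
end

section
/- Let T be a minimum spanning tree of the complete weighted graph on finite set V with edge weights D(u,v), and define U(u,v) to be the maximum weight of an edge on the unique path in T from u to v. Then U is an ultrametric, U(u,v) ≤ D(u,v) for all pairs, and for any other symmetric function O satisfying the strong triangle inequality with O ≤ D pointwise, we have O(u,v) ≤ U(u,v) for all pairs. That is, U is the pointwise-maximal decrement-only ultrametric fit of D. -/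
/-!
Gluing the tree paths `u – w` and `w – v` gives a walk containing the tree path `u – v`, so `U`
is an ultrametric. An edge `e` of the tree path from `u` to `v` with `D e > D u v` could be
exchanged for `s(u, v)`, producing a lighter spanning tree; hence `U ≤ D` (the cycle property of
minimum spanning trees). Finally, if `O ≤ D` satisfies the strong triangle inequality, chaining
it along the tree path bounds `O u v` by the largest weight on that path, which is `U u v`.
-/

open scoped Classical
open Finset

namespace List

variable {α : Type*} [LinearOrder α]

theorem le_foldr_max_self (b : α) (l : List α) : b ≤ l.foldr max b := by
  induction l with
  | nil => rfl
  | cons _ _ ih => exact le_max_of_le_right ih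

theorem foldr_max_le_iff {b c : α} {l : List α} :
    l.foldr max b ≤ c ↔ b ≤ c ∧ ∀ a ∈ l, a ≤ c := by
  induction l with
  | nil => simp
  | cons a l ih => simp only [foldr_cons, max_le_iff, ih, mem_cons, forall_eq_or_imp]; tauto

end List

namespace SimpleGraph

variable {V : Type*}

section Reachability

variable {G H : SimpleGraph V} {a b x y : V}

theorem Reachable.of_deleteEdges_le (hxy : G.Reachable x y)
    (hGH : G.deleteEdges {s(a, b)} ≤ H) (hab : H.Reachable a b) : H.Reachable x y := by
  obtain ⟨p⟩ := hxy
  induction p with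
  | nil => rfl
  | @cons x z y hxz _ ih =>
    refine Reachable.trans ?_ ih
    by_cases hxz' : s(x, z) = s(a, b)
    · rcases Sym2.eq_iff.1 hxz' with ⟨rfl, rfl⟩ | ⟨rfl, rfl⟩
      exacts [hab, hab.symm]
    · exact (hGH ((deleteEdges_adj ..).2 ⟨hxz, hxz'⟩)).reachable

theorem Connected.of_deleteEdges_le (hG : G.Connected) (hGH : G.deleteEdges {s(a, b)} ≤ H)
    (hab : H.Reachable a b) : H.Connected :=
  haveI := hG.nonempty
  ⟨fun _ _ => (hG _ _).of_deleteEdges_le hGH hab⟩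

theorem Walk.IsTrail.reachable_of_mem_edges (hGH : G.deleteEdges {s(a, b)} ≤ H)
    {p : G.Walk x y} (hp : p.IsTrail) (he : s(a, b) ∈ p.edges) (hxy : H.Reachable x y) :
    H.Reachable a b := by
  induction p with
  | nil => simp at he
  | @cons x z y hxz q ih =>
    rw [Walk.isTrail_cons] at hp
    rw [Walk.edges_cons, List.mem_cons] at he
    by_cases heq : s(x, z) = s(a, b)
    · have hzy : H.Reachable z y := ⟨(q.toDeleteEdge _ (heq ▸ hp.2)).mapLe hGH⟩
      rcases Sym2.eq_iff.1 heq with ⟨rfl, rfl⟩ | ⟨rfl, rfl⟩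
      exacts [hxy.trans hzy.symm, (hxy.trans hzy.symm).symm]
    · have hxz' : H.Adj x z := hGH ((deleteEdges_adj ..).2 ⟨hxz, heq⟩)
      exact ih hp.1 (he.resolve_left (Ne.symm heq)) (hxz'.reachable.symm.trans hxy)

end Reachability

namespace Walk

variable {G : SimpleGraph V} (w : Sym2 V → ℝ)

def maxEdgeWeight {u v : V} (p : G.Walk u v) : ℝ := (p.edges.map w).foldr max 0

variable {w} {u v x y x' y' : V}

theorem maxEdgeWeight_nonneg (p : G.Walk u v) : 0 ≤ p.maxEdgeWeight w :=
  List.le_foldr_max_self _ _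

theorem maxEdgeWeight_le_iff {p : G.Walk u v} {c : ℝ} (hc : 0 ≤ c) :
    p.maxEdgeWeight w ≤ c ↔ ∀ e ∈ p.edges, w e ≤ c := by
  simp [maxEdgeWeight, List.foldr_max_le_iff, hc]

theorem le_maxEdgeWeight {p : G.Walk u v} {e : Sym2 V} (he : e ∈ p.edges) :
    w e ≤ p.maxEdgeWeight w :=
  ((maxEdgeWeight_le_iff (maxEdgeWeight_nonneg p)).1 le_rfl) e he

theorem maxEdgeWeight_le_max_of_edges_subset {r : G.Walk u v} (p : G.Walk x y) (q : G.Walk x' y')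
    (h : r.edges ⊆ p.edges ++ q.edges) :
    r.maxEdgeWeight w ≤ max (p.maxEdgeWeight w) (q.maxEdgeWeight w) := by
  refine (maxEdgeWeight_le_iff (le_max_of_le_left (maxEdgeWeight_nonneg p))).2 fun e he => ?_
  rcases List.mem_append.1 (h he) with he | he
  exacts [le_max_of_le_left (le_maxEdgeWeight he), le_max_of_le_right (le_maxEdgeWeight he)]

theorem le_maxEdgeWeight_of_ultrametric {O : V → V → ℝ}
    (hO : ∀ x y z, O x y ≤ max (O x z) (O z y)) (hOw : ∀ x y, G.Adj x y → O x y ≤ w s(x, y))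
    (p : G.Walk u v) (huv : u ≠ v) : O u v ≤ p.maxEdgeWeight w := by
  induction p with
  | nil => exact absurd rfl huv
  | @cons x z y hxz q ih =>
    by_cases hzy : z = y
    · subst hzy
      exact (hOw x z hxz).trans (le_maxEdgeWeight (by simp))
    · calc O x y ≤ max (O x z) (O z y) := hO x y z
        _ ≤ max (w s(x, z)) (q.maxEdgeWeight w) := max_le_max (hOw x z hxz) (ih hzy)
        _ = (cons hxz q).maxEdgeWeight w := rfl

end Walk

section MinSpanningTree

variable [Fintype V]

theorem IsTree.of_connected_of_card_edgeFinset_eq {T T' : SimpleGraph V} [Fintype T.edgeSet]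
    [Fintype T'.edgeSet] (hT : T.IsTree)
    (hT' : T'.Connected) (hcard : #T'.edgeFinset = #T.edgeFinset) : T'.IsTree := by
  refine isTree_iff_connected_and_card.2 ⟨hT', ?_⟩
  rw [Nat.card_eq_fintype_card, ← edgeFinset_card, hcard, edgeFinset_card,
    ← Nat.card_eq_fintype_card]
  exact (isTree_iff_connected_and_card.1 hT).2

-- The `Fintype` instance is taken by unification, so that the lemma rewrites `edgeFinset`
-- whichever instance it carries (e.g. the classical one in `IsMinSpanningTree`).
theorem edgeFinset_deleteEdges_sup_edge [DecidableEq V] {T : SimpleGraph V} [Fintype T.edgeSet]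
    {e : Sym2 V} {u v : V} {_ : Fintype (T.deleteEdges {e} ⊔ edge u v).edgeSet}
    (hne : u ≠ v) :
    (T.deleteEdges {e} ⊔ edge u v).edgeFinset = insert s(u, v) (T.edgeFinset.erase e) := by
  ext e'
  simp [edgeSet_deleteEdges, edgeSet_edge_of_ne hne, or_comm, and_comm]

def IsMinSpanningTree (w : Sym2 V → ℝ) (T : SimpleGraph V) : Prop :=
  T.IsTree ∧ ∀ T' : SimpleGraph V, T'.IsTree → ∑ e ∈ T.edgeFinset, w e ≤ ∑ e ∈ T'.edgeFinset, w e

theorem IsTree.isTree_deleteEdges_sup_edge {T : SimpleGraph V} (hT : T.IsTree) {u v a b : V}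
    {p : T.Walk u v} (hp : p.IsPath) (he : s(a, b) ∈ p.edges) (hne : u ≠ v) (huv : ¬ T.Adj u v) :
    (T.deleteEdges {s(a, b)} ⊔ edge u v).IsTree := by
  have hle : T.deleteEdges {s(a, b)} ≤ T.deleteEdges {s(a, b)} ⊔ edge u v := le_sup_left
  have huv' : (T.deleteEdges {s(a, b)} ⊔ edge u v).Adj u v :=
    Or.inr ((edge_adj ..).2 ⟨Or.inl ⟨rfl, rfl⟩, hne⟩)
  have hT' : (T.deleteEdges {s(a, b)} ⊔ edge u v).Connected :=
    hT.connected.of_deleteEdges_le hle (hp.isTrail.reachable_of_mem_edges hle he huv'.reachable)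
  refine hT.of_connected_of_card_edgeFinset_eq hT' ?_
  rw [edgeFinset_deleteEdges_sup_edge hne, card_insert_of_notMem (by simp [huv]),
    card_erase_add_one (by simpa using p.edges_subset_edgeSet he)]

theorem IsMinSpanningTree.weight_le_of_mem_edges {w : Sym2 V → ℝ} {T : SimpleGraph V}
    (hT : T.IsMinSpanningTree w) {u v : V} (hne : u ≠ v) {p : T.Walk u v} (hp : p.IsPath)
    {e : Sym2 V} (he : e ∈ p.edges) : w e ≤ w s(u, v) := by
  by_cases huv : T.Adj u v
  · have : p = Walk.cons huv .nil :=
      congrArg Subtype.val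
      ((hT.1.isAcyclic.subsingleton_path u v).elim ⟨p, hp⟩ (Path.singleton huv))
    subst this
    obtain rfl : e = s(u, v) := by simpa using he
    exact le_rfl
  induction e using Sym2.ind with | _ a b => ?_
  have hsum := hT.2 _ (hT.1.isTree_deleteEdges_sup_edge hp he hne huv)
  rw [edgeFinset_deleteEdges_sup_edge hne, sum_insert (by simp [huv]),
    sum_erase_eq_sub (by simpa using p.edges_subset_edgeSet he)] at hsum
  linarith

end MinSpanningTree

end SimpleGraph

open SimpleGraph

theorem stmt2_general {V : Type*} [Fintype V]
    (D : V → V → ℝ) (hsymm : ∀ u v, D u v = D v u)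
    (hpos : ∀ u v, u ≠ v → 0 < D u v)
    (T : SimpleGraph V) (hconn : T.Connected) (hacyc : T.IsAcyclic)
    (hMST : ∀ T' : SimpleGraph V, T'.Connected → T'.IsAcyclic →
      ∑ e ∈ T.edgeFinset, Sym2.lift ⟨D, hsymm⟩ e ≤ ∑ e ∈ T'.edgeFinset, Sym2.lift ⟨D, hsymm⟩ e)
    (U : V → V → ℝ)
    (hU : ∀ (u v : V) (p : T.Walk u v), p.IsPath →
      U u v = (p.edges.map (Sym2.lift ⟨D, hsymm⟩)).foldr max 0) :
    (∀ u v w, U u v ≤ max (U u w) (U w v)) ∧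
      (∀ u v, u ≠ v → U u v ≤ D u v) ∧
      (∀ O : V → V → ℝ, (∀ u v, O u v = O v u) →
        (∀ u v w, O u v ≤ max (O u w) (O w v)) →
        (∀ u v, u ≠ v → O u v ≤ D u v) →
        ∀ u v, u ≠ v → O u v ≤ U u v) := by
  set w : Sym2 V → ℝ := Sym2.lift ⟨D, hsymm⟩
  have hU' : ∀ u v (p : T.Walk u v), p.IsPath → U u v = p.maxEdgeWeight w := hU
  have hT : T.IsMinSpanningTree w := ⟨⟨hconn, hacyc⟩, fun T' hT' => hMST T' hT'.1 hT'.2⟩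
  refine ⟨fun u v x => ?_, fun u v huv => ?_, fun O _ hO hOD u v huv => ?_⟩
  · obtain ⟨p, hp⟩ := hconn.exists_isPath u x
    obtain ⟨q, hq⟩ := hconn.exists_isPath x v
    rw [hU' u v _ (p.append q).bypass_isPath, hU' u x p hp, hU' x v q hq]
    exact Walk.maxEdgeWeight_le_max_of_edges_subset p q
      fun e he => Walk.edges_append p q ▸ (p.append q).edges_bypass_subset_edges he
  · obtain ⟨p, hp⟩ := hconn.exists_isPath u v
    rw [hU' u v p hp, Walk.maxEdgeWeight_le_iff (hpos u v huv).le]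
    exact fun e he => hT.weight_le_of_mem_edges huv hp he
  · obtain ⟨p, hp⟩ := hconn.exists_isPath u v
    rw [hU' u v p hp]
    exact p.le_maxEdgeWeight_of_ultrametric hO (fun x y hxy => hOD x y hxy.ne) huv

theorem stmt2 {V : Type*} [Fintype V] [DecidableEq V]
    (D : V → V → ℝ) (hsymm : ∀ u v, D u v = D v u)
    (hpos : ∀ u v, u ≠ v → 0 < D u v)
    (hcard : 2 ≤ Fintype.card V)
    (T : SimpleGraph V) (hconn : T.Connected) (hacyc : T.IsAcyclic)
    (hMST : ∀ T' : SimpleGraph V, T'.Connected → T'.IsAcyclic →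
      ∑ e ∈ T.edgeFinset, Sym2.lift ⟨D, hsymm⟩ e ≤ ∑ e ∈ T'.edgeFinset, Sym2.lift ⟨D, hsymm⟩ e)
    (U : V → V → ℝ)
    (hU : ∀ (u v : V) (p : T.Walk u v), p.IsPath →
      U u v = (p.edges.map (Sym2.lift ⟨D, hsymm⟩)).foldr max 0) :
    (∀ u v w, U u v ≤ max (U u w) (U w v)) ∧
      (∀ u v, u ≠ v → U u v ≤ D u v) ∧
      (∀ O : V → V → ℝ, (∀ u v, O u v = O v u) →
        (∀ u v w, O u v ≤ max (O u w) (O w v)) →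
        (∀ u v, u ≠ v → O u v ≤ D u v) →
        ∀ u v, u ≠ v → O u v ≤ U u v) :=
  stmt2_general D hsymm hpos T hconn hacyc hMST U hU
end

section
/- Suppose 0.8β ≥ 2ε(2-ε)/(1-ε). If u and v belong to the same important group C (every vertex of C is adjacent to at least a (1-ε)-fraction of C and has at most an ε-fraction of its neighbors outside C), then |N(u) △ N(v)| ≤ 0.8β · max(d(u), d(v)). -/
/-- Closed neighborhood of a vertex: its neighbors together with the vertex itself. -/
def closedNbr {V : Type*} [Fintype V] [DecidableEq V] (G : SimpleGraph V)
    [DecidableRel G.Adj] (u : V) : Finset V :=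
  insert u (G.neighborFinset u)

lemma one_side {V : Type*} [DecidableEq V] (A B C : Finset V) (ε : ℝ)
    (hε0 : 0 < ε) (hε1 : ε < 1)
    (hA1 : (1 - ε) * (C.card : ℝ) ≤ ((A ∩ C).card : ℝ))
    (hA2 : ((A \ C).card : ℝ) ≤ ε * (A.card : ℝ))
    (hB1 : (1 - ε) * (C.card : ℝ) ≤ ((B ∩ C).card : ℝ)) :
    ((A \ B).card : ℝ) ≤ ε * (2 - ε) / (1 - ε) * (A.card : ℝ) := by
  have hsub : A \ B ⊆ (A \ C) ∪ (C \ B) := by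
    intro x hx
    simp only [Finset.mem_sdiff, Finset.mem_union] at hx ⊢
    by_cases hc : x ∈ C
    · exact Or.inr ⟨hc, hx.2⟩
    · exact Or.inl ⟨hx.1, hc⟩
  have h1 : ((A \ B).card : ℝ) ≤ ((A \ C).card : ℝ) + ((C \ B).card : ℝ) := by
    calc ((A \ B).card : ℝ) ≤ (((A \ C) ∪ (C \ B)).card : ℝ) := by
          exact_mod_cast Finset.card_le_card hsub
      _ ≤ _ := by exact_mod_cast Finset.card_union_le _ _
  have hCB : ((C \ B).card : ℝ) = (C.card : ℝ) - ((B ∩ C).card : ℝ) := by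
    rw [Finset.inter_comm]
    rw [Finset.card_sdiff_add_card_inter C B |>.symm]
    push_cast
    ring
  have hCB' : ((C \ B).card : ℝ) ≤ ε * (C.card : ℝ) := by
    rw [hCB]; nlinarith
  have hC : (C.card : ℝ) ≤ (A.card : ℝ) / (1 - ε) := by
    have hAC : ((A ∩ C).card : ℝ) ≤ (A.card : ℝ) := by
      exact_mod_cast Finset.card_le_card (Finset.inter_subset_left)
    rw [le_div_iff₀ (by linarith)]
    nlinarith
  have hεpos : (0:ℝ) < 1 - ε := by linarith
  have key : ((A \ B).card : ℝ) ≤ ε * (A.card : ℝ) + ε * (A.card : ℝ) / (1 - ε) := by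
    have h : ε * (C.card : ℝ) ≤ ε * ((A.card : ℝ) / (1 - ε)) := by nlinarith
    have := le_trans hCB' h
    calc ((A \ B).card : ℝ) ≤ ε * (A.card : ℝ) + ε * ((A.card : ℝ) / (1 - ε)) := by
          linarith
      _ = ε * (A.card : ℝ) + ε * (A.card : ℝ) / (1 - ε) := by ring
  have : ε * (A.card : ℝ) + ε * (A.card : ℝ) / (1 - ε) = ε * (2 - ε) / (1 - ε) * (A.card : ℝ) := by
    field_simp; ring
  linarith

theorem stmt5 {V : Type*} [Fintype V] [DecidableEq V] (G : SimpleGraph V)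
    [DecidableRel G.Adj] (β ε : ℝ) (hε0 : 0 < ε) (hε1 : ε < 1)
    (hβ : 2 * ε * (2 - ε) / (1 - ε) ≤ 0.8 * β)
    (C : Finset V)
    (himp : ∀ u ∈ C,
      (1 - ε) * (C.card : ℝ) ≤ ((closedNbr G u ∩ C).card : ℝ) ∧
      ((closedNbr G u \ C).card : ℝ) ≤ ε * ((closedNbr G u).card : ℝ))
    (u v : V) (hu : u ∈ C) (hv : v ∈ C) :
    (((closedNbr G u \ closedNbr G v) ∪ (closedNbr G v \ closedNbr G u)).card : ℝ)
      ≤ 0.8 * β * max ((closedNbr G u).card : ℝ) ((closedNbr G v).card : ℝ) := by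
  obtain ⟨hu1, hu2⟩ := himp u hu
  obtain ⟨hv1, hv2⟩ := himp v hv
  set A := closedNbr G u
  set B := closedNbr G v
  have h1 := one_side A B C ε hε0 hε1 hu1 hu2 hv1
  have h2 := one_side B A C ε hε0 hε1 hv1 hv2 hu1
  have hmaxA : (A.card : ℝ) ≤ max (A.card : ℝ) (B.card : ℝ) := le_max_left _ _
  have hmaxB : (B.card : ℝ) ≤ max (A.card : ℝ) (B.card : ℝ) := le_max_right _ _
  have hcoef : 0 ≤ ε * (2 - ε) / (1 - ε) := by
    apply div_nonneg <;> nlinarith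
  have hcu : ((A \ B ∪ B \ A).card : ℝ) ≤ ((A \ B).card : ℝ) + ((B \ A).card : ℝ) := by
    exact_mod_cast Finset.card_union_le _ _
  have hkey : ((A \ B ∪ B \ A).card : ℝ)
      ≤ 2 * ε * (2 - ε) / (1 - ε) * max (A.card : ℝ) (B.card : ℝ) := by
    have h1' : ε * (2 - ε) / (1 - ε) * (A.card : ℝ)
        ≤ ε * (2 - ε) / (1 - ε) * max (A.card : ℝ) (B.card : ℝ) :=
      mul_le_mul_of_nonneg_left hmaxA hcoef
    have h2' : ε * (2 - ε) / (1 - ε) * (B.card : ℝ)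
        ≤ ε * (2 - ε) / (1 - ε) * max (A.card : ℝ) (B.card : ℝ) :=
      mul_le_mul_of_nonneg_left hmaxB hcoef
    have : 2 * ε * (2 - ε) / (1 - ε) * max (A.card : ℝ) (B.card : ℝ)
        = ε * (2 - ε) / (1 - ε) * max (A.card : ℝ) (B.card : ℝ)
        + ε * (2 - ε) / (1 - ε) * max (A.card : ℝ) (B.card : ℝ) := by ring
    linarith
  have hmax0 : 0 ≤ max (A.card : ℝ) (B.card : ℝ) := le_trans (by positivity) hmaxA
  calc ((A \ B ∪ B \ A).card : ℝ)
      ≤ 2 * ε * (2 - ε) / (1 - ε) * max (A.card : ℝ) (B.card : ℝ) := hkey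
    _ ≤ 0.8 * β * max (A.card : ℝ) (B.card : ℝ) := mul_le_mul_of_nonneg_right hβ hmax0
end

section
/- Suppose 2ε ≤ 1 - 3β. If u and v belong to two disjoint important groups C_u and C_v respectively, then |N(u) △ N(v)| > (1 - 2ε) · max(d(u), d(v)) ≥ 3β · max(d(u), d(v)); in particular u and v are not in 3β-agreement. -/
lemma key_sdiff {V : Type*} [DecidableEq V] (ε : ℝ) (A B Cu Cv : Finset V)
    (hdisj : Disjoint Cu Cv)
    (hA : ((A \ Cu).card : ℝ) ≤ ε * A.card)
    (hB : ((B \ Cv).card : ℝ) ≤ ε * B.card) :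
    (1 - ε) * A.card - ε * B.card ≤ ((A \ B).card : ℝ) := by
  have h1 : (A ∩ Cu).card + (A \ Cu).card = A.card :=
    Finset.card_inter_add_card_sdiff A Cu
  have h2 : (A ∩ Cu).card ≤ ((A ∩ Cu) \ B ∪ (B ∩ Cu)).card := by
    apply Finset.card_le_card
    intro x hx
    simp only [Finset.mem_union, Finset.mem_sdiff, Finset.mem_inter] at *
    by_cases hxB : x ∈ B
    · exact Or.inr ⟨hxB, hx.2⟩
    · exact Or.inl ⟨hx, hxB⟩
  have h2' : ((A ∩ Cu) \ B ∪ (B ∩ Cu)).card ≤ ((A ∩ Cu) \ B).card + (B ∩ Cu).card :=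
    Finset.card_union_le _ _
  have h3 : (B ∩ Cu).card ≤ (B \ Cv).card := by
    apply Finset.card_le_card
    intro x hx
    simp only [Finset.mem_sdiff, Finset.mem_inter] at *
    exact ⟨hx.1, fun hxv => (Finset.disjoint_left.mp hdisj hx.2) hxv⟩
  have h4 : ((A ∩ Cu) \ B).card ≤ (A \ B).card := by
    apply Finset.card_le_card
    intro x hx
    simp only [Finset.mem_sdiff, Finset.mem_inter] at *
    exact ⟨hx.1.1, hx.2⟩
  have c1 : ((A ∩ Cu).card : ℝ) + ((A \ Cu).card : ℝ) = A.card := by exact_mod_cast h1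
  have c2 : ((A ∩ Cu).card : ℝ) ≤ ((A ∩ Cu) \ B).card + ((B ∩ Cu).card : ℝ) := by
    exact_mod_cast le_trans h2 h2'
  have c3 : ((B ∩ Cu).card : ℝ) ≤ ((B \ Cv).card : ℝ) := by exact_mod_cast h3
  have c4 : (((A ∩ Cu) \ B).card : ℝ) ≤ ((A \ B).card : ℝ) := by exact_mod_cast h4
  nlinarith [hA, hB]

theorem stmt6 {V : Type*} [Fintype V] [DecidableEq V] (G : SimpleGraph V)
    [DecidableRel G.Adj] (β ε : ℝ) (hε0 : 0 < ε) (hε1 : ε < 1) (hβ0 : 0 < β)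
    (hparams : 2 * ε ≤ 1 - 3 * β)
    (Cu Cv : Finset V) (hdisj : Disjoint Cu Cv)
    (himpu : ∀ u ∈ Cu,
      (1 - ε) * (Cu.card : ℝ) ≤ ((closedNbr G u ∩ Cu).card : ℝ) ∧
      ((closedNbr G u \ Cu).card : ℝ) ≤ ε * ((closedNbr G u).card : ℝ))
    (himpv : ∀ v ∈ Cv,
      (1 - ε) * (Cv.card : ℝ) ≤ ((closedNbr G v ∩ Cv).card : ℝ) ∧
      ((closedNbr G v \ Cv).card : ℝ) ≤ ε * ((closedNbr G v).card : ℝ))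
    (u v : V) (hu : u ∈ Cu) (hv : v ∈ Cv) :
    ((1 - 2 * ε) * max ((closedNbr G u).card : ℝ) ((closedNbr G v).card : ℝ)
        < (((closedNbr G u \ closedNbr G v) ∪ (closedNbr G v \ closedNbr G u)).card : ℝ)) ∧
      (3 * β * max ((closedNbr G u).card : ℝ) ((closedNbr G v).card : ℝ)
        ≤ (1 - 2 * ε) * max ((closedNbr G u).card : ℝ) ((closedNbr G v).card : ℝ)) ∧
      ¬ ((((closedNbr G u \ closedNbr G v) ∪ (closedNbr G v \ closedNbr G u)).card : ℝ)
        < 3 * β * max ((closedNbr G u).card : ℝ) ((closedNbr G v).card : ℝ)) := by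
  set A := closedNbr G u with hAdef
  set B := closedNbr G v with hBdef
  have hAu : ((A \ Cu).card : ℝ) ≤ ε * A.card := (himpu u hu).2
  have hBv : ((B \ Cv).card : ℝ) ≤ ε * B.card := (himpv v hv).2
  have k1 : (1 - ε) * A.card - ε * B.card ≤ ((A \ B).card : ℝ) :=
    key_sdiff ε A B Cu Cv hdisj hAu hBv
  have k2 : (1 - ε) * B.card - ε * A.card ≤ ((B \ A).card : ℝ) :=
    key_sdiff ε B A Cv Cu hdisj.symm hBv hAu
  have hdAB : Disjoint (A \ B) (B \ A) := by
    apply Finset.disjoint_left.mpr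
    intro x hx hx'
    simp only [Finset.mem_sdiff] at *
    exact hx.2 hx'.1
  have hcard : ((A \ B) ∪ (B \ A)).card = (A \ B).card + (B \ A).card :=
    Finset.card_union_of_disjoint hdAB
  have huA : u ∈ A := Finset.mem_insert_self _ _
  have hvB : v ∈ B := Finset.mem_insert_self _ _
  have hA1 : (1 : ℝ) ≤ A.card := by
    exact_mod_cast Finset.card_pos.mpr ⟨u, huA⟩
  have hB1 : (1 : ℝ) ≤ B.card := by
    exact_mod_cast Finset.card_pos.mpr ⟨v, hvB⟩
  have hε2 : 1 - 2 * ε > 0 := by linarith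
  have hmax : max ((A.card : ℝ)) ((B.card : ℝ)) + 1 ≤ A.card + B.card := by
    rcases max_cases ((A.card : ℝ)) ((B.card : ℝ)) with ⟨h, _⟩ | ⟨h, _⟩ <;> rw [h] <;> linarith
  have hmax0 : (0 : ℝ) ≤ max ((A.card : ℝ)) ((B.card : ℝ)) := le_trans hA1 (le_max_left _ _) |>.trans' (by norm_num)
  have hsum : (((A \ B) ∪ (B \ A)).card : ℝ) = ((A \ B).card : ℝ) + ((B \ A).card : ℝ) := by
    exact_mod_cast hcard
  have main : (1 - 2 * ε) * max ((A.card : ℝ)) ((B.card : ℝ))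
      < (((A \ B) ∪ (B \ A)).card : ℝ) := by
    rw [hsum]
    nlinarith [hmax, hmax0]
  refine ⟨main, ?_, ?_⟩
  · nlinarith [hmax0]
  · intro h
    nlinarith [hmax0]
end

section
/- For any ultrametric T not necessarily taking values among the entries of D, the ultrametric T' obtained by replacing each distance d in T with the smallest entry of D that is at least d (or with the maximum entry of D if no such entry exists) is still an ultrametric and satisfies ‖T' - D‖₀ ≤ ‖T - D‖₀. -/
open scoped Classical

/-- Number of (unordered) pairs on which two symmetric matrices differ. -/
noncomputable def l0diff {n : ℕ} (A B : Fin n → Fin n → ℝ) : ℕ :=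
  ((Finset.univ : Finset (Fin n × Fin n)).filter fun p => p.1 < p.2 ∧ A p.1 p.2 ≠ B p.1 p.2).card

theorem stmt9 {n : ℕ} (D T : Fin n → Fin n → ℝ)
    (S : Finset ℝ) (hS : S.Nonempty) (hSpos : ∀ s ∈ S, 0 < s)
    (hD : ∀ u v : Fin n, u ≠ v → D u v ∈ S)
    (hT : ∀ u v w, T u v ≤ max (T u w) (T w v))
    (round : ℝ → ℝ)
    (hround1 : ∀ d : ℝ, (∃ s ∈ S, d ≤ s) →
      round d ∈ S ∧ d ≤ round d ∧ ∀ s ∈ S, d ≤ s → round d ≤ s)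
    (hround2 : ∀ d : ℝ, (∀ s ∈ S, s < d) → round d = S.max' hS) :
    (∀ u v w, round (T u v) ≤ max (round (T u w)) (round (T w v))) ∧
      l0diff (fun u v => round (T u v)) D ≤ l0diff T D := by
  have mono : ∀ d e : ℝ, d ≤ e → round d ≤ round e := by
    intro d e hde
    by_cases h : ∃ s ∈ S, e ≤ s
    · obtain ⟨s, hs, hes⟩ := h
      obtain ⟨hd1, hd2, hd3⟩ := hround1 d ⟨s, hs, hde.trans hes⟩
      obtain ⟨he1, he2, he3⟩ := hround1 e ⟨s, hs, hes⟩
      exact hd3 _ he1 (hde.trans he2)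
    · push_neg at h
      rw [hround2 e h]
      by_cases h2 : ∃ s ∈ S, d ≤ s
      · exact Finset.le_max' S _ (hround1 d h2).1
      · push_neg at h2; rw [hround2 d h2]
  have fix : ∀ d : ℝ, d ∈ S → round d = d := by
    intro d hd
    obtain ⟨h1, h2, h3⟩ := hround1 d ⟨d, hd, le_rfl⟩
    exact le_antisymm (h3 d hd le_rfl) h2
  constructor
  · intro u v w
    calc round (T u v) ≤ round (max (T u w) (T w v)) := mono _ _ (hT u v w)
      _ ≤ max (round (T u w)) (round (T w v)) := by
        rcases max_cases (T u w) (T w v) with ⟨h1, _⟩ | ⟨h1, _⟩ <;> rw [h1]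
        · exact le_max_left _ _
        · exact le_max_right _ _
  · unfold l0diff
    apply Finset.card_le_card
    intro p hp
    simp only [Finset.mem_filter, Finset.mem_univ, true_and] at hp ⊢
    refine ⟨hp.1, fun heq => hp.2 ?_⟩
    rw [heq]
    exact fix _ (hD p.1 p.2 (ne_of_lt hp.1))
end

section
/- Let D be a symmetric function on pairs of V taking values in {1, 2} where D(i,j) = x_{ij} + 1 for bits x_{ij}, extended to one extra vertex n+1 with D(n+1, i) = D(n+1, j) = 0 and D(n+1, k) = 1.5 for k ∉ {i, j}. If x_{ij} = 1, then every ultrametric U on V ∪ {n+1} satisfies max over pairs |U - D| ≥ 1, and this bound is achieved; if x_{ij} = 0 then there exists an ultrametric with max error at most 0.5. -/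
theorem stmt11 (n : ℕ) (i j : Fin n) (hij : i ≠ j)
    (x : Fin n → Fin n → Bool) (hx : ∀ a b, x a b = x b a)
    (D : Option (Fin n) → Option (Fin n) → ℝ)
    (hDsymm : ∀ a b, D a b = D b a)
    (hD1 : ∀ a b : Fin n, a ≠ b → D (some a) (some b) = (if x a b then 1 else 0) + 1)
    (hDi : D none (some i) = 0) (hDj : D none (some j) = 0)
    (hDk : ∀ k : Fin n, k ≠ i → k ≠ j → D none (some k) = 1.5) :
    (x i j = true →
      (∀ U : Option (Fin n) → Option (Fin n) → ℝ,
        (∀ a b, U a b = U b a) → (∀ a b, 0 ≤ U a b) →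
        (∀ a b c, U a b ≤ max (U a c) (U c b)) →
        ∃ a b, a ≠ b ∧ 1 ≤ |U a b - D a b|) ∧
      (∃ U : Option (Fin n) → Option (Fin n) → ℝ,
        (∀ a b, U a b = U b a) ∧ (∀ a b, 0 ≤ U a b) ∧
        (∀ a b c, U a b ≤ max (U a c) (U c b)) ∧
        ∀ a b, a ≠ b → |U a b - D a b| ≤ 1)) ∧
    (x i j = false →
      ∃ U : Option (Fin n) → Option (Fin n) → ℝ,
        (∀ a b, U a b = U b a) ∧ (∀ a b, 0 ≤ U a b) ∧
        (∀ a b c, U a b ≤ max (U a c) (U c b)) ∧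
        ∀ a b, a ≠ b → |U a b - D a b| ≤ 0.5) := by
  have hij' : (some i : Option (Fin n)) ≠ some j := by simpa using hij
  refine ⟨fun hx1 => ⟨?_, ?_⟩, fun hx0 => ?_⟩
  · -- lower bound
    intro U hUs hU0 hUt
    by_contra h
    push_neg at h
    have h1 := h (some i) (some j) hij'
    have h2 := h none (some i) (by simp)
    have h3 := h none (some j) (by simp)
    rw [hD1 i j hij, hx1] at h1
    rw [hDi, sub_zero] at h2
    rw [hDj, sub_zero] at h3
    norm_num at h1
    rw [abs_lt] at h1 h2 h3
    have ht := hUt (some i) (some j) none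
    rw [hUs (some i) none] at ht
    have hm : max (U none (some i)) (U none (some j)) < 1 := max_lt h2.2 h3.2
    linarith [h1.1]
  · -- achievability with error 1
    refine ⟨fun _ _ => 1, fun _ _ => rfl, fun _ _ => zero_le_one, fun _ _ _ => by simp, ?_⟩
    rintro (_|a) (_|b) hab
    · exact absurd rfl hab
    · dsimp only
      by_cases hbi : b = i
      · subst hbi; rw [hDi, abs_le]; norm_num
      · by_cases hbj : b = j
        · subst hbj; rw [hDj, abs_le]; norm_num
        · rw [hDk b hbi hbj, abs_le]; norm_num
    · dsimp only
      rw [hDsymm]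
      by_cases hai : a = i
      · subst hai; rw [hDi, abs_le]; norm_num
      · by_cases haj : a = j
        · subst haj; rw [hDj, abs_le]; norm_num
        · rw [hDk a hai haj, abs_le]; norm_num
    · have hab' : a ≠ b := fun e => hab (by rw [e])
      dsimp only
      rw [hD1 a b hab']
      rcases x a b <;> rw [abs_le] <;> norm_num
  · -- x i j = false : two-level ultrametric
    classical
    set S : Option (Fin n) → Prop := fun a => a = none ∨ a = some i ∨ a = some j with hS
    refine ⟨fun a b => if a = b then 0 else if S a ∧ S b then 0.5 else 1.5, ?_, ?_, ?_, ?_⟩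
    · intro a b
      dsimp only
      rcases eq_or_ne a b with rfl | hab
      · rfl
      · rw [if_neg hab, if_neg (Ne.symm hab)]
        by_cases hsa : S a ∧ S b
        · rw [if_pos hsa, if_pos ⟨hsa.2, hsa.1⟩]
        · rw [if_neg hsa, if_neg (fun e : S b ∧ S a => hsa ⟨e.2, e.1⟩)]
    · intro a b; dsimp only; split_ifs <;> norm_num
    · intro a b c
      dsimp only
      rcases eq_or_ne a b with rfl | hab
      · rw [if_pos rfl]
        have h1 : (0:ℝ) ≤ if a = c then 0 else if S a ∧ S c then 0.5 else 1.5 := by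
          split_ifs <;> norm_num
        exact le_trans h1 (le_max_left _ _)
      · rw [if_neg hab]
        rcases eq_or_ne a c with rfl | hac
        · rw [if_pos rfl, if_neg hab]
          exact le_max_right _ _
        · rcases eq_or_ne c b with rfl | hcb
          · rw [if_neg hab]
            exact le_max_left _ _
          · rw [if_neg hac, if_neg hcb]
            by_cases hsab : S a ∧ S b
            · rw [if_pos hsab]
              by_cases hsc : S c
              · rw [if_pos ⟨hsab.1, hsc⟩]; exact le_max_left _ _
              · have h2 : ¬ (S a ∧ S c) := fun e => hsc e.2
                rw [if_neg h2]
                exact le_trans (by norm_num) (le_max_left _ _)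
            · rw [if_neg hsab]
              by_cases h1 : S a ∧ S c
              · have h2 : ¬ (S c ∧ S b) := fun e => hsab ⟨h1.1, e.2⟩
                rw [if_neg h2]; exact le_max_right _ _
              · rw [if_neg h1]; exact le_max_left _ _
    · rintro (_|a) (_|b) hab
      · exact absurd rfl hab
      · have hSn : S (none : Option (Fin n)) := Or.inl rfl
        dsimp only
        rw [if_neg hab]
        by_cases hbi : b = i
        · subst hbi
          rw [if_pos ⟨hSn, Or.inr (Or.inl rfl)⟩, hDi, abs_le]; norm_num
        · by_cases hbj : b = j
          · subst hbj
            rw [if_pos ⟨hSn, Or.inr (Or.inr rfl)⟩, hDj, abs_le]; norm_num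
          · have hns : ¬ (S (none : Option (Fin n)) ∧ S (some b)) := by
              rintro ⟨-, (h|h|h)⟩ <;> simp_all
            rw [if_neg hns, hDk b hbi hbj, abs_le]; norm_num
      · have hSn : S (none : Option (Fin n)) := Or.inl rfl
        dsimp only
        rw [if_neg hab, hDsymm]
        by_cases hai : a = i
        · subst hai
          rw [if_pos ⟨Or.inr (Or.inl rfl), hSn⟩, hDi, abs_le]; norm_num
        · by_cases haj : a = j
          · subst haj
            rw [if_pos ⟨Or.inr (Or.inr rfl), hSn⟩, hDj, abs_le]; norm_num
          · have hns : ¬ (S (some a) ∧ S (none : Option (Fin n))) := by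
              rintro ⟨(h|h|h), -⟩ <;> simp_all
            rw [if_neg hns, hDk a hai haj, abs_le]; norm_num
      · have hab' : a ≠ b := fun e => hab (by rw [e])
        dsimp only
        rw [if_neg hab, hD1 a b hab']
        by_cases hs : S (some a) ∧ S (some b)
        · have ha : a = i ∨ a = j := by rcases hs.1 with h|h|h <;> simp_all
          have hb : b = i ∨ b = j := by rcases hs.2 with h|h|h <;> simp_all
          have hxab : x a b = false := by
            rcases ha with rfl|rfl <;> rcases hb with rfl|rfl
            · exact absurd rfl hab'
            · exact hx0
            · rw [hx]; exact hx0
            · exact absurd rfl hab'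
          rw [if_pos hs, hxab, abs_le]; norm_num
        · rw [if_neg hs]
          rcases hxab : x a b <;> rw [abs_le] <;> norm_num
end
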